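/- arXiv:2506.23324 — 2 statements merged into one kernel-verified Lean document; each statement's English description precedes it below -/
import Mathlib

section
/- Under the same assumptions (β ≥ 0, {a_k} strongly increasing, {d_{k,i}} a regular kernel, {b_k} positive), Σ_{k=N}^{M} a_k (Σ_{i=k}^{M} d_{k,i+1} b_i)^β ≈ Σ_{k=N}^{M} a_k d_{k,k+1}^β (Σ_{i=k}^{M} b_i)^β. -/
/-!
The lower bound holds termwise, since `d k (k + 1) ≤ d k (i + 1)` for `i ≥ k`.

For the upper bound, the quasi-triangle inequality makes `d ^ α`, for some `0 < α ≤ 1` depending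
only on `cd`, satisfy `d k i ^ α ≤ √2 * max (d k j ^ α) (d j i ^ α)`; Frink's chain argument turns
this into the decomposition `d k (i + 1) ^ α ≤ 2 * ∑_{k ≤ j ≤ i} d j (j + 1) ^ α`. With
`B j = ∑_{i ≥ j} b i`, Minkowski's inequality in `ℓ^(1/α)` then bounds `∑_{i ≥ k} d k (i + 1) * b i`
by `2 ^ (1/α) * (∑_{j ≥ k} c j) ^ (1/α)`, where `c j = d j (j + 1) ^ α * B j ^ α`. Finally, because
`a` grows geometrically, `∑_k a k * (∑_{j ≥ k} c j) ^ γ ≲ ∑_k a k * c k ^ γ` for every `γ > 0`: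
compare `c j` with a geometric sequence that decays more slowly than `a` grows.
-/

open ENNReal

/-- The set of integers `k` with `N ≤ k ≤ M`, where `N, M` are extended reals
(so that `N = -∞` or `M = +∞` are allowed). -/
def zset (N M : EReal) : Set ℤ := {k : ℤ | N ≤ ((k : ℝ) : EReal) ∧ ((k : ℝ) : EReal) ≤ M}

theorem ENNReal.iSup_rpow {ι : Sort*} (f : ι → ℝ≥0∞) {γ : ℝ} (hγ : 0 < γ) :
    (⨆ i, f i) ^ γ = ⨆ i, f i ^ γ :=
  (orderIsoRpow γ hγ).map_iSup f

theorem ENNReal.tsum_iSup_of_monotone {ι κ : Type*} [Preorder κ] [IsDirectedOrder κ]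
    (g : κ → ι → ℝ≥0∞) (hg : ∀ i, Monotone fun s => g s i) :
    ∑' i, ⨆ s, g s i = ⨆ s, ∑' i, g s i := by
  simp only [ENNReal.tsum_eq_iSup_sum, ENNReal.finsetSum_iSup_of_monotone hg]
  exact iSup_comm

open MeasureTheory in
theorem ENNReal.Lp_sum_le {ι κ : Type*} {p : ℝ} (hp : 1 ≤ p) (s : Finset κ)
    (v : κ → ι → ℝ≥0∞) :
    (∑' i, (∑ j ∈ s, v j i) ^ p) ^ (1 / p) ≤ ∑ j ∈ s, (∑' i, v j i ^ p) ^ (1 / p) := by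
  let _ : MeasurableSpace ι := ⊤
  have := eLpNorm'_sum_le (μ := Measure.count) (f := v) (s := s)
    (fun j _ => measurable_from_top.aestronglyMeasurable) hp
  simpa [eLpNorm', lintegral_count, Finset.sum_apply] using this

theorem ENNReal.Lp_tsum_le {ι κ : Type*} {p : ℝ} (hp : 1 ≤ p) (v : κ → ι → ℝ≥0∞) :
    (∑' i, (∑' j, v j i) ^ p) ^ (1 / p) ≤ ∑' j, (∑' i, v j i ^ p) ^ (1 / p) := by
  have hp0 : 0 < p := zero_lt_one.trans_le hp
  have hmono : ∀ i, Monotone fun s : Finset κ => (∑ j ∈ s, v j i) ^ p := fun i s t hst =>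
    ENNReal.rpow_le_rpow (Finset.sum_le_sum_of_subset hst) hp0.le
  calc (∑' i, (∑' j, v j i) ^ p) ^ (1 / p)
      = ⨆ s : Finset κ, (∑' i, (∑ j ∈ s, v j i) ^ p) ^ (1 / p) := by
        simp only [ENNReal.tsum_eq_iSup_sum (f := fun j => v j _), ENNReal.iSup_rpow _ hp0]
        rw [ENNReal.tsum_iSup_of_monotone _ hmono, ENNReal.iSup_rpow _ (by positivity)]
    _ ≤ ∑' j, (∑' i, v j i ^ p) ^ (1 / p) :=
        iSup_le fun s => (ENNReal.Lp_sum_le hp s v).trans (ENNReal.sum_le_tsum s)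

theorem tsum_ite_le_eq_tsum_add {M : Type*} [AddCommMonoid M] [TopologicalSpace M] (l : ℕ)
    (f : ℕ → M) : ∑' m, (if l ≤ m then f m else 0) = ∑' n, f (l + n) := by
  rw [← (add_right_injective l).tsum_eq]
  · simp
  · intro m hm
    exact ⟨m - l, Nat.add_sub_cancel' (by_contra fun h => hm (if_neg h))⟩

theorem ENNReal.tsum_rpow_sum_range_mul_le {p : ℝ} (hp : 1 ≤ p) (f g : ℕ → ℝ≥0∞) :
    ∑' m, (∑ l ∈ Finset.range (m + 1), f l) ^ p * g m ≤
      (∑' l, f l * (∑' n, g (l + n)) ^ (1 / p)) ^ p := by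
  have hp0 : 0 < p := zero_lt_one.trans_le hp
  set v : ℕ → ℕ → ℝ≥0∞ := fun l m => if l ≤ m then f l * g m ^ (1 / p) else 0
  have hrow : ∀ m, (∑' l, v l m) ^ p = (∑ l ∈ Finset.range (m + 1), f l) ^ p * g m := by
    intro m
    rw [tsum_eq_sum (s := Finset.range (m + 1)) fun l hl => if_neg (by simpa using hl),
      Finset.sum_congr rfl fun l hl => if_pos (Finset.mem_range_succ_iff.1 hl), ← Finset.sum_mul,
      ENNReal.mul_rpow_of_nonneg _ _ hp0.le, one_div, ENNReal.rpow_inv_rpow hp0.ne']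
  have hcol : ∀ l, (∑' m, v l m ^ p) ^ (1 / p) = f l * (∑' n, g (l + n)) ^ (1 / p) := by
    intro l
    have hpow : ∀ m, v l m ^ p = if l ≤ m then f l ^ p * g m else 0 := fun m => by
      unfold v
      split_ifs
      · rw [ENNReal.mul_rpow_of_nonneg _ _ hp0.le, one_div, ENNReal.rpow_inv_rpow hp0.ne']
      · exact ENNReal.zero_rpow_of_pos hp0
    simp only [hpow, tsum_ite_le_eq_tsum_add, ENNReal.tsum_mul_left]
    rw [ENNReal.mul_rpow_of_nonneg _ _ (by positivity), one_div, ENNReal.rpow_rpow_inv hp0.ne']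
  calc ∑' m, (∑ l ∈ Finset.range (m + 1), f l) ^ p * g m
      = ((∑' m, (∑' l, v l m) ^ p) ^ (1 / p)) ^ p := by
        simp only [hrow, one_div, ENNReal.rpow_inv_rpow hp0.ne']
    _ ≤ (∑' l, (∑' m, v l m ^ p) ^ (1 / p)) ^ p := by
        gcongr
        exact ENNReal.Lp_tsum_le hp v
    _ = (∑' l, f l * (∑' n, g (l + n)) ^ (1 / p)) ^ p := by simp only [hcol]

theorem ENNReal.rpow_tsum_mul_le {ι : Type*} {γ : ℝ} (hγ : 0 < γ) (w g : ι → ℝ≥0∞) :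
    (∑' i, w i * g i) ^ γ ≤ (∑' i, w i) ^ γ * ∑' i, g i ^ γ :=
  calc (∑' i, w i * g i) ^ γ ≤ ((∑' i, w i) * ⨆ i, g i) ^ γ := by
        rw [← ENNReal.tsum_mul_right]
        gcongr with i
        exact le_iSup g i
    _ ≤ (∑' i, w i) ^ γ * ∑' i, g i ^ γ := by
        rw [ENNReal.mul_rpow_of_nonneg _ _ hγ.le, ENNReal.iSup_rpow g hγ]
        gcongr
        exact iSup_le ENNReal.le_tsum

theorem ENNReal.rpow_tsum_le_geometric {γ : ℝ} (hγ : 0 < γ) {r : ℝ≥0∞} (hr0 : r ≠ 0)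
    (hr : r ≠ ∞) (f : ℕ → ℝ≥0∞) :
    (∑' m, f m) ^ γ ≤ (∑' m : ℕ, r ^ m) ^ γ * ∑' m, (r ^ γ)⁻¹ ^ m * f m ^ γ := by
  have hcancel : ∀ m : ℕ, r ^ m * ((r ^ m)⁻¹ * f m) = f m := fun m => by
    rw [← mul_assoc, ENNReal.mul_inv_cancel (pow_ne_zero m hr0) (ENNReal.pow_ne_top hr), one_mul]
  have hpow : ∀ m : ℕ, ((r ^ m)⁻¹ * f m) ^ γ = (r ^ γ)⁻¹ ^ m * f m ^ γ := fun m => by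
    rw [ENNReal.mul_rpow_of_nonneg _ _ hγ.le, ENNReal.inv_rpow, ← ENNReal.rpow_natCast_mul,
      mul_comm (m : ℝ), ENNReal.rpow_mul_natCast, ENNReal.inv_pow]
  simpa only [hcancel, hpow] using
    ENNReal.rpow_tsum_mul_le hγ (fun m : ℕ => r ^ m) fun m => (r ^ m)⁻¹ * f m

theorem ENNReal.exists_tsum_mul_rpow_tsum_le {γ : ℝ} (hγ : 0 < γ) {q : ℝ≥0∞} (hq0 : q ≠ 0)
    (hq1 : q < 1) :
    ∃ K : ℝ≥0∞, K ≠ ∞ ∧ ∀ A c : ℤ → ℝ≥0∞,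
      (∀ k (m : ℕ), c (k + m) ≠ 0 → A k ≤ q ^ m * A (k + m)) →
      ∑' k, A k * (∑' m : ℕ, c (k + m)) ^ γ ≤ K * ∑' k, A k * c k ^ γ := by
  -- Weighting the tail by `r ^ m`, where `r ^ γ = √q`, costs a factor `√q⁻¹ ^ m`; the growth
  -- `A k ≤ q ^ m * A (k + m)` pays for it and leaves the summable factor `√q ^ m`.
  set s := q ^ (2⁻¹ : ℝ)
  set r := s ^ γ⁻¹
  have hs0 : s ≠ 0 := (ENNReal.rpow_pos (pos_iff_ne_zero.2 hq0) (hq1.trans_le le_top).ne).ne'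
  have hs1 : s < 1 := ENNReal.rpow_lt_one hq1 (by norm_num)
  have hsq : q = s * s := by
    rw [← ENNReal.rpow_add _ _ hq0 (hq1.trans_le le_top).ne]; norm_num
  have hr0 : r ≠ 0 := (ENNReal.rpow_pos (pos_iff_ne_zero.2 hs0) (hs1.trans_le le_top).ne).ne'
  have hr1 : r < 1 := ENNReal.rpow_lt_one hs1 (by positivity)
  have hrs : r ^ γ = s := ENNReal.rpow_inv_rpow hγ.ne' s
  refine ⟨(∑' m : ℕ, r ^ m) ^ γ * ∑' m : ℕ, s ^ m, ?_, fun A c hA => ?_⟩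
  · rw [ENNReal.tsum_geometric, ENNReal.tsum_geometric]
    exact ENNReal.mul_ne_top
      (ENNReal.rpow_ne_top_of_nonneg hγ.le (ENNReal.inv_ne_top.2 (tsub_pos_of_lt hr1).ne'))
      (ENNReal.inv_ne_top.2 (tsub_pos_of_lt hs1).ne')
  have hweight : ∀ k (m : ℕ),
      A k * (s⁻¹ ^ m * c (k + m) ^ γ) ≤ s ^ m * (A (k + m) * c (k + m) ^ γ) := by
    intro k m
    by_cases hc : c (k + m) = 0
    · simp [hc, ENNReal.zero_rpow_of_pos hγ]
    calc A k * (s⁻¹ ^ m * c (k + m) ^ γ)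
        ≤ (s ^ m * s ^ m * A (k + m)) * (s⁻¹ ^ m * c (k + m) ^ γ) := by
          gcongr
          simpa [hsq, mul_pow] using hA k m hc
      _ = s ^ m * (A (k + m) * c (k + m) ^ γ) * (s⁻¹ * s) ^ m := by ring
      _ = s ^ m * (A (k + m) * c (k + m) ^ γ) := by
          rw [ENNReal.inv_mul_cancel hs0 (hs1.trans_le le_top).ne, one_pow, mul_one]
  calc ∑' k, A k * (∑' m : ℕ, c (k + m)) ^ γ
      ≤ ∑' k, A k * ((∑' m : ℕ, r ^ m) ^ γ * ∑' m : ℕ, s⁻¹ ^ m * c (k + m) ^ γ) := by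
        gcongr with k
        simpa only [hrs] using
          ENNReal.rpow_tsum_le_geometric hγ hr0 (hr1.trans_le le_top).ne fun m => c (k + m)
    _ = (∑' m : ℕ, r ^ m) ^ γ * ∑' m : ℕ, ∑' k, A k * (s⁻¹ ^ m * c (k + m) ^ γ) := by
        simp only [mul_left_comm (A _), ← ENNReal.tsum_mul_left]
        rw [ENNReal.tsum_comm]
    _ ≤ (∑' m : ℕ, r ^ m) ^ γ * ∑' m : ℕ, ∑' k, s ^ m * (A (k + m) * c (k + m) ^ γ) := by
        gcongr _ * ?_
        exact ENNReal.tsum_le_tsum fun m => ENNReal.tsum_le_tsum (hweight · m)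
    _ = (∑' m : ℕ, r ^ m) ^ γ * ∑' m : ℕ, s ^ m * ∑' k, A k * c k ^ γ := by
        simp only [ENNReal.tsum_mul_left]
        congr 2 with m
        exact congrArg _ ((Equiv.addRight (m : ℤ)).tsum_eq fun k => A k * c k ^ γ)
    _ = (∑' m : ℕ, r ^ m) ^ γ * (∑' m : ℕ, s ^ m) * ∑' k, A k * c k ^ γ := by
        rw [ENNReal.tsum_mul_right, mul_assoc]

theorem ENNReal.rpow_mul_rpow_tsum_le {ι : Type*} {β : ℝ} (hβ : 0 ≤ β) {x : ℝ≥0∞}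
    {f g : ι → ℝ≥0∞} (h : ∀ i, x ≤ f i) : x ^ β * (∑' i, g i) ^ β ≤ (∑' i, f i * g i) ^ β := by
  rw [← ENNReal.mul_rpow_of_nonneg _ _ hβ, ← ENNReal.tsum_mul_left]
  gcongr with i
  exact h i

theorem exists_sum_Ico_le_half_of_nonneg {f : ℕ → ℝ} (hf : ∀ l, 0 ≤ f l) {u v : ℕ}
    (huv : u < v) :
    ∃ w, u ≤ w ∧ w < v ∧ ∑ l ∈ Finset.Ico u w, f l ≤ (∑ l ∈ Finset.Ico u v, f l) / 2 ∧
      ∑ l ∈ Finset.Ico (w + 1) v, f l ≤ (∑ l ∈ Finset.Ico u v, f l) / 2 := by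
  set S := ∑ l ∈ Finset.Ico u v, f l
  have hS : 0 ≤ S := Finset.sum_nonneg fun l _ => hf l
  set P : ℕ → Prop := fun w => ∑ l ∈ Finset.Ico u w, f l ≤ S / 2
  have hPu : P u := by simp only [P, Finset.Ico_self, Finset.sum_empty]; linarith
  set w := Nat.findGreatest P (v - 1)
  have huw : u ≤ w := Nat.le_findGreatest (by omega) hPu
  have hwv : w ≤ v - 1 := Nat.findGreatest_le _
  refine ⟨w, huw, by omega, Nat.findGreatest_spec (by omega) hPu, ?_⟩
  rcases (show w + 1 = v ∨ w + 1 ≤ v - 1 by omega) with hlast | hlt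
  · simp only [hlast, Finset.Ico_self, Finset.sum_empty]; linarith
  · have hnot : ¬ P (w + 1) := Nat.findGreatest_is_greatest (Nat.lt_succ_self w) hlt
    have hsplit :=
      Finset.sum_Ico_consecutive f (show u ≤ w + 1 by omega) (show w + 1 ≤ v by omega)
    simp only [P, not_le] at hnot
    linarith

theorem le_two_mul_sum_Ico_of_le_sqrt_two_mul_max {D : ℕ → ℕ → ℝ} (hD0 : ∀ l, 0 ≤ D l (l + 1))
    (hD : ∀ u w v, u ≤ w → w ≤ v → D u v ≤ √2 * max (D u w) (D w v)) {u v : ℕ} (huv : u < v) :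
    D u v ≤ 2 * ∑ l ∈ Finset.Ico u v, D l (l + 1) := by
  induction hn : v - u using Nat.strong_induction_on generalizing u v with
  | _ n ih =>
  set S := ∑ l ∈ Finset.Ico u v, D l (l + 1)
  have hS : 0 ≤ S := Finset.sum_nonneg fun l _ => hD0 l
  have hS2 : S ≤ √2 * S := le_mul_of_one_le_left hS (Real.one_le_sqrt.2 one_le_two)
  have h22 : √2 * √2 = 2 := Real.mul_self_sqrt zero_le_two
  have hS2' : √2 * S ≤ 2 * S := by gcongr; exact Real.sqrt_le_iff.2 ⟨by norm_num, by norm_num⟩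
  obtain ⟨w, huw, hwv, hleft, hright⟩ := exists_sum_Ico_le_half_of_nonneg hD0 huv
  have hL : u < w → D u w ≤ S := fun h => by linarith [ih (w - u) (by omega) h rfl]
  have hM : D w (w + 1) ≤ S := Finset.single_le_sum (f := fun l => D l (l + 1))
    (fun l _ => hD0 l) (Finset.mem_Ico.2 ⟨huw, hwv⟩)
  have hR : w + 1 < v → D (w + 1) v ≤ S := fun h => by
    linarith [ih (v - (w + 1)) (by omega) h rfl]
  have hWV : D w v ≤ √2 * S := by
    rcases (show w + 1 = v ∨ w + 1 < v by omega) with hlast | hlt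
    · rw [← hlast]; exact hM.trans hS2
    · exact (hD w (w + 1) v (by omega) hlt.le).trans
        (mul_le_mul_of_nonneg_left (max_le hM (hR hlt)) (Real.sqrt_nonneg 2))
  rcases huw.eq_or_lt with rfl | hlt
  · linarith
  · calc D u v ≤ √2 * max (D u w) (D w v) := hD u w v huw hwv.le
      _ ≤ √2 * (√2 * S) :=
        mul_le_mul_of_nonneg_left (max_le ((hL hlt).trans hS2) hWV) (Real.sqrt_nonneg 2)
      _ = 2 * S := by rw [← mul_assoc, h22]

theorem Real.exists_rpow_le_sqrt_two_mul_max (C : ℝ) :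
    ∃ α : ℝ, 0 < α ∧ α ≤ 1 ∧ ∀ x y z : ℝ, 0 ≤ x → 0 ≤ y → 0 ≤ z → z ≤ C * (x + y) →
      z ^ α ≤ √2 * max (x ^ α) (y ^ α) := by
  set b := 2 * max C 1
  have hb : 2 ≤ b := by simp only [b]; linarith [le_max_right C 1]
  have hsqrt : 1 < √2 := by rw [Real.lt_sqrt zero_le_one]; norm_num
  have hsqrt2 : √2 ≤ b := Real.sqrt_le_iff.2 ⟨by linarith, by nlinarith⟩
  refine ⟨Real.logb b √2, Real.logb_pos (by linarith) hsqrt,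
    (Real.logb_le_logb_of_le (by linarith) (by positivity) hsqrt2).trans_eq
      (Real.logb_self_eq_one (by linarith)), fun x y z hx hy hz hzxy => ?_⟩
  set α := Real.logb b √2
  have hα : 0 ≤ α := (Real.logb_pos (by linarith) hsqrt).le
  have hzb : z ≤ b * max x y := by
    have h1 : C * (x + y) ≤ max C 1 * (x + y) := by gcongr; exact le_max_left C 1
    have h2 : x + y ≤ 2 * max x y := by linarith [le_max_left x y, le_max_right x y]
    nlinarith [le_max_right C 1]
  calc z ^ α ≤ (b * max x y) ^ α := Real.rpow_le_rpow hz hzb hα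
    _ = b ^ α * max x y ^ α := Real.mul_rpow (by linarith) (le_max_of_le_left hx)
    _ = √2 * max (x ^ α) (y ^ α) := by
        rw [Real.rpow_logb (by linarith) (by linarith) (by positivity)]
        rcases le_total x y with h | h
        · rw [max_eq_right h, max_eq_right (Real.rpow_le_rpow hx h hα)]
        · rw [max_eq_left h, max_eq_left (Real.rpow_le_rpow hy h hα)]

theorem exists_ofReal_rpow_le_two_mul_sum_of_le_mul_add (C : ℝ) :
    ∃ α : ℝ, 0 < α ∧ α ≤ 1 ∧ ∀ d : ℤ → ℤ → ℝ, (∀ k i, 0 ≤ d k i) →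
      (∀ k j i : ℤ, k ≤ j → j ≤ i → d k i ≤ C * (d k j + d j i)) →
      ∀ k (m : ℕ), ENNReal.ofReal (d k (k + m + 1)) ^ α ≤
        2 * ∑ l ∈ Finset.range (m + 1), ENNReal.ofReal (d (k + l) (k + l + 1)) ^ α := by
  obtain ⟨α, hα0, hα1, hα⟩ := Real.exists_rpow_le_sqrt_two_mul_max C
  refine ⟨α, hα0, hα1, fun d hd0 hd k m => ?_⟩
  have hchain := le_two_mul_sum_Ico_of_le_sqrt_two_mul_max
    (D := fun u v : ℕ => d (k + u) (k + v) ^ α) (fun l => Real.rpow_nonneg (hd0 _ _) α)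
    (fun u w v huw hwv => hα _ _ _ (hd0 _ _) (hd0 _ _) (hd0 _ _) (hd _ _ _ (by omega) (by omega)))
    m.zero_lt_succ
  simp only [Nat.cast_zero, add_zero, Nat.cast_succ, ← add_assoc,
    ← Finset.range_eq_Ico] at hchain
  rw [ENNReal.ofReal_rpow_of_nonneg (hd0 _ _) hα0.le]
  refine (ENNReal.ofReal_le_ofReal hchain).trans_eq ?_
  rw [ENNReal.ofReal_mul zero_le_two, ENNReal.ofReal_ofNat,
    ENNReal.ofReal_sum_of_nonneg fun l _ => Real.rpow_nonneg (hd0 _ _) α]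
  simp only [ENNReal.ofReal_rpow_of_nonneg (hd0 _ _) hα0.le]

theorem ENNReal.tsum_mul_le_two_rpow_mul_rpow_tsum {α : ℝ} (hα0 : 0 < α) (hα1 : α ≤ 1)
    (B : ℤ → ℝ≥0∞) (D : ℤ → ℤ → ℝ≥0∞) (k : ℤ)
    (hD : ∀ m : ℕ, D k (k + m + 1) ^ α ≤
      2 * ∑ l ∈ Finset.range (m + 1), D (k + l) (k + l + 1) ^ α) :
    ∑' m : ℕ, D k (k + m + 1) * B (k + m) ≤
      2 ^ α⁻¹ * (∑' l : ℕ, D (k + l) (k + l + 1) ^ α * (∑' n : ℕ, B (k + l + n)) ^ α) ^ α⁻¹ := by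
  have hp : 1 ≤ α⁻¹ := (one_le_inv₀ hα0).2 hα1
  calc ∑' m : ℕ, D k (k + m + 1) * B (k + m)
      ≤ ∑' m : ℕ, (2 * ∑ l ∈ Finset.range (m + 1), D (k + l) (k + l + 1) ^ α) ^ α⁻¹ *
          B (k + m) := by
        gcongr with m
        rw [← ENNReal.rpow_rpow_inv hα0.ne' (D k _)]
        gcongr
        exact hD m
    _ = 2 ^ α⁻¹ * ∑' m : ℕ,
          (∑ l ∈ Finset.range (m + 1), D (k + l) (k + l + 1) ^ α) ^ α⁻¹ * B (k + m) := by
        simp only [ENNReal.mul_rpow_of_nonneg _ _ (inv_pos.2 hα0).le, mul_assoc,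
          ENNReal.tsum_mul_left]
    _ ≤ 2 ^ α⁻¹ * (∑' l : ℕ, D (k + l) (k + l + 1) ^ α *
          (∑' n : ℕ, B (k + (l + n : ℕ))) ^ (1 / α⁻¹)) ^ α⁻¹ := by
        gcongr
        exact ENNReal.tsum_rpow_sum_range_mul_le hp _ fun m => B (k + m)
    _ = _ := by simp only [one_div, inv_inv, Nat.cast_add, add_assoc]

theorem ENNReal.exists_tsum_mul_rpow_tsum_kernel_le {α β : ℝ} (hα0 : 0 < α) (hα1 : α ≤ 1)
    (hβ : 0 < β) {q : ℝ≥0∞} (hq0 : q ≠ 0) (hq1 : q < 1) :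
    ∃ C : ℝ, 0 < C ∧ ∀ (A B : ℤ → ℝ≥0∞) (D : ℤ → ℤ → ℝ≥0∞),
      (∀ k (m : ℕ), D k (k + m + 1) ^ α ≤
        2 * ∑ l ∈ Finset.range (m + 1), D (k + l) (k + l + 1) ^ α) →
      (∀ k (m n : ℕ), B (k + m + n) ≠ 0 → A k ≤ q ^ m * A (k + m)) →
      ∑' k, A k * (∑' m : ℕ, D k (k + m + 1) * B (k + m)) ^ β ≤
        ENNReal.ofReal C * ∑' k, A k * D k (k + 1) ^ β * (∑' m : ℕ, B (k + m)) ^ β := by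
  have hγ : 0 < α⁻¹ * β := by positivity
  obtain ⟨K, hK, hsum⟩ := ENNReal.exists_tsum_mul_rpow_tsum_le hγ hq0 hq1
  have hK' : 2 ^ (α⁻¹ * β) * K ≠ ∞ :=
    ENNReal.mul_ne_top (ENNReal.rpow_ne_top_of_nonneg hγ.le ENNReal.ofNat_ne_top) hK
  refine ⟨(2 ^ (α⁻¹ * β) * K).toReal + 1, by positivity, fun A B D hD hA => ?_⟩
  set c : ℤ → ℝ≥0∞ := fun j => D j (j + 1) ^ α * (∑' n : ℕ, B (j + n)) ^ α
  have hcA : ∀ k (m : ℕ), c (k + m) ≠ 0 → A k ≤ q ^ m * A (k + m) := by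
    intro k m hc
    obtain ⟨n, hn⟩ : ∃ n : ℕ, B (k + m + n) ≠ 0 := by
      by_contra! h
      exact hc (by simp [c, ENNReal.tsum_eq_zero.2 h, ENNReal.zero_rpow_of_pos hα0])
    exact hA k m n hn
  have hcγ : ∀ k, c k ^ (α⁻¹ * β) = D k (k + 1) ^ β * (∑' m : ℕ, B (k + m)) ^ β := by
    intro k
    simp only [c, ENNReal.mul_rpow_of_nonneg _ _ hγ.le, ← ENNReal.rpow_mul, ← mul_assoc,
      mul_inv_cancel₀ hα0.ne', one_mul]
  calc ∑' k, A k * (∑' m : ℕ, D k (k + m + 1) * B (k + m)) ^ β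
      ≤ ∑' k, A k * (2 ^ α⁻¹ * (∑' l : ℕ, c (k + l)) ^ α⁻¹) ^ β := by
        gcongr with k
        exact ENNReal.tsum_mul_le_two_rpow_mul_rpow_tsum hα0 hα1 B D k (hD k)
    _ = 2 ^ (α⁻¹ * β) * ∑' k, A k * (∑' l : ℕ, c (k + l)) ^ (α⁻¹ * β) := by
        simp only [ENNReal.mul_rpow_of_nonneg _ _ hβ.le, ← ENNReal.rpow_mul, mul_left_comm (A _),
          ENNReal.tsum_mul_left]
    _ ≤ 2 ^ (α⁻¹ * β) * (K * ∑' k, A k * c k ^ (α⁻¹ * β)) := by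
        gcongr
        exact hsum A c hcA
    _ = 2 ^ (α⁻¹ * β) * K * ∑' k, A k * D k (k + 1) ^ β * (∑' m : ℕ, B (k + m)) ^ β := by
        simp only [hcγ, mul_assoc]
    _ ≤ ENNReal.ofReal ((2 ^ (α⁻¹ * β) * K).toReal + 1) *
          ∑' k, A k * D k (k + 1) ^ β * (∑' m : ℕ, B (k + m)) ^ β := by
        gcongr
        exact (ENNReal.le_ofReal_iff_toReal_le hK' (by positivity)).2 (by linarith)

theorem ordConnected_zset (N M : EReal) : (zset N M).OrdConnected :=
  ⟨fun _ hk _ hi _ hj =>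
    ⟨hk.1.trans (by exact_mod_cast hj.1), le_trans (by exact_mod_cast hj.2) hi.2⟩⟩

theorem le_of_mem_zset {k i : ℤ} {M : EReal} (hi : i ∈ zset ((k : ℝ) : EReal) M) : k ≤ i := by
  exact_mod_cast hi.1

theorem mem_zset_iff_of_mem {N M : EReal} {k i : ℤ} (hk : k ∈ zset N M) :
    i ∈ zset ((k : ℝ) : EReal) M ↔ k ≤ i ∧ i ∈ zset N M :=
  ⟨fun hi => ⟨le_of_mem_zset hi, hk.1.trans hi.1, hi.2⟩,
    fun ⟨hki, hi⟩ => ⟨by exact_mod_cast hki, hi.2⟩⟩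

theorem tsum_zset_eq_tsum_indicator_add {N M : EReal} {k : ℤ} (hk : k ∈ zset N M)
    (f : ℤ → ℝ≥0∞) :
    ∑' i : zset ((k : ℝ) : EReal) M, f i = ∑' m : ℕ, (zset N M).indicator f (k + m) := by
  have hinj : Function.Injective fun m : ℕ => k + m := fun m n h => by simpa using h
  have hsupp : Function.support ((zset ((k : ℝ) : EReal) M).indicator f) ⊆
      Set.range fun m : ℕ => k + m :=
    fun i hi => ⟨(i - k).toNat, by
      have := le_of_mem_zset (Set.support_indicator_subset hi); simp only; omega⟩
  rw [_root_.tsum_subtype, ← hinj.tsum_eq hsupp]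
  refine tsum_congr fun m => ?_
  classical
  simp [Set.indicator_apply, mem_zset_iff_of_mem hk]

theorem tsum_zset_mul_rpow_tsum_zset (N M : EReal) (F : ℤ → ℝ≥0∞) (G : ℤ → ℤ → ℝ≥0∞)
    (β : ℝ) :
    ∑' k : zset N M, F k * (∑' i : zset ((k : ℤ) : ℝ) M, G k i) ^ β =
      ∑' k, (zset N M).indicator F k * (∑' m : ℕ, (zset N M).indicator (G k) (k + m)) ^ β := by
  rw [_root_.tsum_subtype (zset N M)
    fun k : ℤ => F k * (∑' i : zset ((k : ℝ) : EReal) M, G k i) ^ β]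
  refine tsum_congr fun k => ?_
  by_cases hk : k ∈ zset N M
  · simp only [Set.indicator_of_mem hk, tsum_zset_eq_tsum_indicator_add hk]
  · simp only [Set.indicator_of_notMem hk, zero_mul]

theorem pow_mul_le_of_mul_le_succ {S : Set ℤ} (hS : S.OrdConnected) {a : ℤ → ℝ} {ρ : ℝ}
    (hρ : 0 ≤ ρ) (ha : ∀ k, k ∈ S → k + 1 ∈ S → ρ * a k ≤ a (k + 1)) {k : ℤ} (hk : k ∈ S)
    (m : ℕ) (hkm : k + m ∈ S) : ρ ^ m * a k ≤ a (k + m) := by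
  induction m with
  | zero => simp
  | succ m ih =>
    rw [Nat.cast_succ, ← add_assoc] at hkm ⊢
    have hm : k + m ∈ S := hS.out hk hkm ⟨by omega, by omega⟩
    calc ρ ^ (m + 1) * a k = ρ * (ρ ^ m * a k) := by ring
      _ ≤ ρ * a (k + m) := by gcongr; exact ih hm
      _ ≤ a (k + m + 1) := ha _ hm hkm

theorem indicator_ofReal_le_pow_mul_indicator {S : Set ℤ} (hS : S.OrdConnected) {a : ℤ → ℝ}
    {ρ : ℝ} (hρ : 0 < ρ) (ha : ∀ k, k ∈ S → k + 1 ∈ S → ρ * a k ≤ a (k + 1)) {k : ℤ} {m n : ℕ}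
    (h : k + m + n ∈ S) :
    S.indicator (fun k => ENNReal.ofReal (a k)) k ≤
      ENNReal.ofReal ρ⁻¹ ^ m * S.indicator (fun k => ENNReal.ofReal (a k)) (k + m) := by
  by_cases hk : k ∈ S
  · have hkm : k + m ∈ S := hS.out hk h ⟨by omega, by omega⟩
    rw [Set.indicator_of_mem hk, Set.indicator_of_mem hkm,
      ← ENNReal.ofReal_pow (inv_nonneg.2 hρ.le), ← ENNReal.ofReal_mul (by positivity)]
    refine ENNReal.ofReal_le_ofReal ?_
    rw [inv_pow, inv_mul_eq_div, le_div_iff₀ (pow_pos hρ m), mul_comm]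
    exact pow_mul_le_of_mul_le_succ hS hρ.le ha hk m hkm
  · simp [hk]

theorem sum_kernel_sum_of_strongly_increasing_general (β ρ cd : ℝ)
    (hβ : 0 ≤ β) (hρ : 1 < ρ) :
    ∃ c C : ℝ, 0 < c ∧ 0 < C ∧
      ∀ (N M : EReal), N < M → ∀ (a b : ℤ → ℝ) (d : ℤ → ℤ → ℝ),
        (∀ k, 0 < a k) → (∀ k, 0 < b k) →
        (∀ k : ℤ, k ∈ zset N M → (k + 1) ∈ zset N M → ρ * a k ≤ a (k + 1)) →
        (∀ k i, 0 ≤ d k i) →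
        (∀ k j i : ℤ, k ≤ j → d j i ≤ d k i) →
        (∀ k j i : ℤ, j ≤ i → d k j ≤ d k i) →
        (∀ k j i : ℤ, k ≤ j → j ≤ i → d k i ≤ cd * (d k j + d j i)) →
        ENNReal.ofReal c *
            (∑' k : zset N M, ENNReal.ofReal (a (k : ℤ)) *
                ENNReal.ofReal (d (k : ℤ) ((k : ℤ) + 1)) ^ β *
                (∑' i : zset (((k : ℤ) : ℝ) : EReal) M, ENNReal.ofReal (b (i : ℤ))) ^ β) ≤
          (∑' k : zset N M, ENNReal.ofReal (a (k : ℤ)) *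
              (∑' i : zset (((k : ℤ) : ℝ) : EReal) M,
                ENNReal.ofReal (d (k : ℤ) ((i : ℤ) + 1)) * ENNReal.ofReal (b (i : ℤ))) ^ β) ∧
        (∑' k : zset N M, ENNReal.ofReal (a (k : ℤ)) *
            (∑' i : zset (((k : ℤ) : ℝ) : EReal) M,
              ENNReal.ofReal (d (k : ℤ) ((i : ℤ) + 1)) * ENNReal.ofReal (b (i : ℤ))) ^ β) ≤
          ENNReal.ofReal C *
            (∑' k : zset N M, ENNReal.ofReal (a (k : ℤ)) *
                ENNReal.ofReal (d (k : ℤ) ((k : ℤ) + 1)) ^ β *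
                (∑' i : zset (((k : ℤ) : ℝ) : EReal) M, ENNReal.ofReal (b (i : ℤ))) ^ β) := by
  rcases hβ.eq_or_lt with rfl | hβ
  · exact ⟨1, 1, one_pos, one_pos, fun N M _ a b d _ _ _ _ _ _ _ => by simp⟩
  have hρ0 : 0 < ρ := zero_lt_one.trans hρ
  obtain ⟨α, hα0, hα1, hdecomp⟩ := exists_ofReal_rpow_le_two_mul_sum_of_le_mul_add cd
  obtain ⟨C, hC, hupper⟩ := ENNReal.exists_tsum_mul_rpow_tsum_kernel_le hα0 hα1 hβ
    (ENNReal.ofReal_pos.2 (inv_pos.2 hρ0)).ne' (ENNReal.ofReal_lt_one.2 (inv_lt_one_of_one_lt₀ hρ))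
  refine ⟨1, C, one_pos, hC, fun N M _ a b d _ _ ha hd0 _ hd2 hd3 => ⟨?_, ?_⟩⟩
  · rw [ENNReal.ofReal_one, one_mul]
    refine ENNReal.tsum_le_tsum fun k => ?_
    rw [mul_assoc]
    gcongr
    exact ENNReal.rpow_mul_rpow_tsum_le hβ.le fun i =>
      ENNReal.ofReal_le_ofReal (hd2 _ _ _ (by linarith [le_of_mem_zset i.2]))
  · rw [tsum_zset_mul_rpow_tsum_zset N M (fun k => ENNReal.ofReal (a k))
      (fun k i => ENNReal.ofReal (d k (i + 1)) * ENNReal.ofReal (b i)),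
      tsum_zset_mul_rpow_tsum_zset N M
        (fun k => ENNReal.ofReal (a k) * ENNReal.ofReal (d k (k + 1)) ^ β)
        (fun _ i => ENNReal.ofReal (b i))]
    conv_lhs => simp only [Set.indicator_mul_right]
    conv_rhs => simp only [Set.indicator_mul_left]
    exact hupper ((zset N M).indicator fun k => ENNReal.ofReal (a k))
      ((zset N M).indicator fun i => ENNReal.ofReal (b i)) (fun k i => ENNReal.ofReal (d k i))
      (hdecomp d hd0 hd3) fun k m n h =>
      indicator_ofReal_le_pow_mul_indicator (ordConnected_zset N M) hρ0 ha
        (Set.mem_of_indicator_ne_zero h)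

theorem sum_kernel_sum_of_strongly_increasing (β ρ cd : ℝ)
    (hβ : 0 ≤ β) (hρ : 1 < ρ) (hcd : 0 < cd) :
    ∃ c C : ℝ, 0 < c ∧ 0 < C ∧
      ∀ (N M : EReal), N < M → ∀ (a b : ℤ → ℝ) (d : ℤ → ℤ → ℝ),
        (∀ k, 0 < a k) → (∀ k, 0 < b k) →
        (∀ k : ℤ, k ∈ zset N M → (k + 1) ∈ zset N M → ρ * a k ≤ a (k + 1)) →
        (∀ k i, 0 ≤ d k i) →
        (∀ k j i : ℤ, k ≤ j → d j i ≤ d k i) →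
        (∀ k j i : ℤ, j ≤ i → d k j ≤ d k i) →
        (∀ k j i : ℤ, k ≤ j → j ≤ i → d k i ≤ cd * (d k j + d j i)) →
        ENNReal.ofReal c *
            (∑' k : zset N M, ENNReal.ofReal (a (k : ℤ)) *
                ENNReal.ofReal (d (k : ℤ) ((k : ℤ) + 1)) ^ β *
                (∑' i : zset (((k : ℤ) : ℝ) : EReal) M, ENNReal.ofReal (b (i : ℤ))) ^ β) ≤
          (∑' k : zset N M, ENNReal.ofReal (a (k : ℤ)) *
              (∑' i : zset (((k : ℤ) : ℝ) : EReal) M,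
                ENNReal.ofReal (d (k : ℤ) ((i : ℤ) + 1)) * ENNReal.ofReal (b (i : ℤ))) ^ β) ∧
        (∑' k : zset N M, ENNReal.ofReal (a (k : ℤ)) *
            (∑' i : zset (((k : ℤ) : ℝ) : EReal) M,
              ENNReal.ofReal (d (k : ℤ) ((i : ℤ) + 1)) * ENNReal.ofReal (b (i : ℤ))) ^ β) ≤
          ENNReal.ofReal C *
            (∑' k : zset N M, ENNReal.ofReal (a (k : ℤ)) *
                ENNReal.ofReal (d (k : ℤ) ((k : ℤ) + 1)) ^ β *
                (∑' i : zset (((k : ℤ) : ℝ) : EReal) M, ENNReal.ofReal (b (i : ℤ))) ^ β) :=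
  sum_kernel_sum_of_strongly_increasing_general β ρ cd hβ hρ
end

section
/- Let 0 < q < p < ∞, 0 < r ≤ 1, and let {x_k}_{k=N}^∞ be a discretizing sequence of W = ∫_·^b w. With V_r(x,y) = (∫_x^y v^{1/(1−r)})^{(1−r)/r} for r < 1 and V_r(x,y) = ess sup_{(x,y)} v for r = 1, one has for each k ≥ N+1: sup_{N+1 ≤ i ≤ k} 2^{iq/(p−q)} V_r(x_{i−1}, x_i)^{pq/(p−q)} ≈ ess sup_{t ∈ (a, x_k)} W(t)^{−q/(p−q)} V_r(t, x_k)^{pq/(p−q)}. -/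
/-!
Write β = q/(p-q) and ρ = pβ. For the bound of the discrete supremum, on (x_{i-1}, x_i) one has
W ≤ W(x_{i-1}) ≲ 2^{-i}, so W^{-β} ≳ 2^{iβ}; and V_r(x_{i-1}, x_i) is the limit from the right
of the antitone function t ↦ V_r(t, x_i), hence at most its essential supremum on (x_{i-1}, x_i).
Conversely, for t ∈ (x_{j-1}, x_j] one has W(t)^{-β} ≲ 2^{jβ} and V_r(t, x_k) ≤ V_r(x_{j-1}, x_k).
Split (x_{j-1}, x_k] into the pieces (x_{i-1}, x_i], j ≤ i ≤ k: for r = 1 the essential supremum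
over the union is the largest one over a piece, and for r < 1 the integrals of v^{1/(1-r)} over the
pieces add up, each being at most (2^{-iβ} D)^{1/τ} with τ = (1-r)ρ/r and D the discrete supremum,
so their sum is dominated by a geometric series started at i = j.
-/

open MeasureTheory Set ENNReal

/-- The interval `(x, y)` in `ℝ` with extended-real endpoints. -/
def erIoo (x y : EReal) : Set ℝ := {t : ℝ | x < (t : EReal) ∧ (t : EReal) < y}

/-- `W(x) = ∫_x^b w`. -/
noncomputable def Wf (w : ℝ → ℝ≥0∞) (b : EReal) (x : ℝ) : ℝ≥0∞ :=
  ∫⁻ t in erIoo (x : EReal) b, w t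

/-- The quantity `V_r(x,y)`: `(∫_x^y v^{1/(1-r)})^{(1-r)/r}` when `r < 1`, and
`ess sup_{(x,y)} v` when `r = 1`. -/
noncomputable def Vr (r : ℝ) (v : ℝ → ℝ≥0∞) (x : ℝ) (y : EReal) : ℝ≥0∞ :=
  if r = 1 then essSup v (volume.restrict (erIoo (x : EReal) y))
  else (∫⁻ s in erIoo (x : EReal) y, v s ^ (1 / (1 - r))) ^ ((1 - r) / r)

lemma erIoo_coe (x y : ℝ) : erIoo x y = Ioo x y := by
  ext t; simp [erIoo]

section EssSup

variable {α : Type*} [MeasurableSpace α] {μ : Measure α} {f : α → ℝ≥0∞}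

lemma le_essSup_of_measure_setOf_le_ne_zero {c : ℝ≥0∞} (h : μ {x | c ≤ f x} ≠ 0) :
    c ≤ essSup f μ := by
  by_contra! hlt
  exact h (measure_mono_null (fun x hx => hlt.trans_le hx) (meas_essSup_lt (f := f) (μ := μ)))

lemma essSup_restrict_iUnion_le {ι : Type*} [Countable ι] (s : ι → Set α) :
    essSup f (μ.restrict (⋃ i, s i)) ≤ ⨆ i, essSup f (μ.restrict (s i)) :=
  essSup_le_of_ae_le _ <| (ae_restrict_iUnion_iff s _).2 fun i =>
    (ae_le_essSup f).mono fun _ hx => hx.trans (le_iSup_of_le i le_rfl)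

lemma essSup_restrict_biUnion_finset_le {ι : Type*} (t : Finset ι) (s : ι → Set α) :
    essSup f (μ.restrict (⋃ i ∈ t, s i)) ≤ ⨆ i ∈ t, essSup f (μ.restrict (s i)) :=
  essSup_le_of_ae_le _ <| (ae_restrict_biUnion_finset_iff s t _).2 fun i hi =>
    (ae_le_essSup f).mono fun _ hx => hx.trans (le_iSup₂_of_le i hi le_rfl)

end EssSup

lemma Antitone.le_essSup_restrict_Ioo {f : ℝ → ℝ≥0∞} (hf : Antitone f) {x y s : ℝ}
    (hs : s ∈ Ioo x y) : f s ≤ essSup f (volume.restrict (Ioo x y)) := by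
  refine le_essSup_of_measure_setOf_le_ne_zero ?_
  rw [Measure.restrict_apply' measurableSet_Ioo]
  have hsub : Ioo x s ⊆ {t | f s ≤ f t} ∩ Ioo x y := fun t ht =>
    ⟨hf ht.2.le, ht.1, ht.2.trans hs.2⟩
  exact ((Measure.measure_Ioo_pos volume).2 hs.1).trans_le (measure_mono hsub) |>.ne'

lemma Ioc_subset_biUnion_Ioc_Icc (y : ℤ → ℝ) {j k : ℤ} (hjk : j - 1 ≤ k) :
    Ioc (y (j - 1)) (y k) ⊆ ⋃ i ∈ Finset.Icc j k, Ioc (y (i - 1)) (y i) := by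
  induction k, hjk using Int.leInduction with
  | base => simp
  | succ k hk ih =>
    refine Ioc_subset_Ioc_union_Ioc.trans (union_subset (ih.trans ?_) ?_)
    · exact biUnion_subset_biUnion_left fun i hi => by
        simp only [Finset.coe_Icc, mem_Icc] at hi ⊢; omega
    · have hk1 : k + 1 ∈ Finset.Icc j (k + 1) := Finset.mem_Icc.2 ⟨by omega, le_rfl⟩
      simpa using subset_biUnion_of_mem (u := fun i => Ioc (y (i - 1)) (y i)) hk1

-- Half-open rather than open intervals, so that consecutive pieces tile exactly.
noncomputable def VrSet (r : ℝ) (v : ℝ → ℝ≥0∞) (S : Set ℝ) : ℝ≥0∞ :=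
  if r = 1 then essSup v (volume.restrict S)
  else volume.withDensity (fun s => v s ^ (1 / (1 - r))) S ^ ((1 - r) / r)

section Vr

variable {r : ℝ} {v : ℝ → ℝ≥0∞}

lemma Vr_coe (x y : ℝ) : Vr r v x y = VrSet r v (Ioc x y) := by
  rw [Vr, VrSet, erIoo_coe, Measure.restrict_congr_set Ioo_ae_eq_Ioc, withDensity_apply']

variable (hr0 : 0 < r) (hr1 : r ≤ 1)
include hr0 hr1

lemma VrSet_mono : Monotone (VrSet r v) := by
  intro S T hST
  unfold VrSet
  split_ifs
  · exact essSup_mono_measure' (Measure.restrict_mono hST le_rfl)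
  · exact rpow_le_rpow (measure_mono hST) (div_nonneg (sub_nonneg.2 hr1) hr0.le)

lemma VrSet_iUnion_le {S : ℕ → Set ℝ} (hS : Monotone S) :
    VrSet r v (⋃ n, S n) ≤ ⨆ n, VrSet r v (S n) := by
  unfold VrSet
  split_ifs with hr
  · exact essSup_restrict_iUnion_le S
  · rw [hS.measure_iUnion]
    exact ((orderIsoRpow _ (div_pos (sub_pos.2 (hr1.lt_of_ne hr)) hr0)).map_iSup _).le

lemma Vr_le_Vr {x x' y y' : ℝ} (hx : x ≤ x') (hy : y' ≤ y) : Vr r v x' y' ≤ Vr r v x y := by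
  simpa only [Vr_coe] using VrSet_mono hr0 hr1 (Ioc_subset_Ioc hx hy)

lemma Vr_le_iSup_Vr {x y : ℝ} (hxy : x < y) : Vr r v x y ≤ ⨆ s ∈ Ioo x y, Vr r v s y := by
  obtain ⟨u, hu_anti, hu_mem, hu_lim⟩ := exists_seq_strictAnti_tendsto' hxy
  have hU : Ioc x y = ⋃ n, Ioc (u n) y := by
    ext t
    simp only [mem_Ioc, mem_iUnion]
    constructor
    · rintro ⟨hxt, hty⟩
      obtain ⟨n, hn⟩ := (hu_lim.eventually (gt_mem_nhds hxt)).exists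
      exact ⟨n, hn, hty⟩
    · rintro ⟨n, hn, hty⟩
      exact ⟨(hu_mem n).1.trans hn, hty⟩
  rw [Vr_coe, hU]
  refine (VrSet_iUnion_le hr0 hr1 fun _ _ h => Ioc_subset_Ioc_left (hu_anti.antitone h)).trans ?_
  exact iSup_le fun n => le_iSup₂_of_le (u n) (hu_mem n) (Vr_coe (u n) y).ge

lemma Vr_rpow_le_essSup {ρ : ℝ} (hρ : 0 < ρ) {x y : ℝ} (hxy : x < y) :
    Vr r v x y ^ ρ ≤ essSup (fun t => Vr r v t y ^ ρ) (volume.restrict (Ioo x y)) :=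
  calc Vr r v x y ^ ρ ≤ (⨆ s ∈ Ioo x y, Vr r v s y) ^ ρ :=
        rpow_le_rpow (Vr_le_iSup_Vr hr0 hr1 hxy) hρ.le
    _ = ⨆ s ∈ Ioo x y, Vr r v s y ^ ρ := (orderIsoRpow ρ hρ).map_iSup₂ _
    _ ≤ _ := iSup₂_le fun _ hs => Antitone.le_essSup_restrict_Ioo
        (fun _ _ h => rpow_le_rpow (Vr_le_Vr hr0 hr1 h le_rfl) hρ.le) hs

end Vr

lemma sum_Icc_pow_toNat_sub_le (x : ℝ≥0∞) (j k : ℤ) :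
    ∑ i ∈ Finset.Icc j k, x ^ (i - j).toNat ≤ (1 - x)⁻¹ := by
  have hinj : Set.InjOn (fun i : ℤ => (i - j).toNat) (Finset.Icc j k) := fun i₁ h₁ i₂ h₂ h => by
    simp only [Finset.coe_Icc, mem_Icc] at h₁ h₂
    simp only at h
    omega
  rw [← Finset.sum_image (f := fun n : ℕ => x ^ n) hinj]
  exact (ENNReal.sum_le_tsum _).trans (ENNReal.tsum_geometric x).le

lemma two_rpow_mul_sum_le {s : ℝ} {a : ℤ → ℝ≥0∞} {j k : ℤ} {M : ℝ≥0∞}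
    (h : ∀ i ∈ Finset.Icc j k, 2 ^ ((i : ℝ) * s) * a i ≤ M) :
    2 ^ ((j : ℝ) * s) * ∑ i ∈ Finset.Icc j k, a i ≤ (1 - 2 ^ (-s))⁻¹ * M := by
  have hterm : ∀ i ∈ Finset.Icc j k,
      2 ^ ((j : ℝ) * s) * a i = (2 ^ (-s)) ^ (i - j).toNat * (2 ^ ((i : ℝ) * s) * a i) := by
    intro i hi
    have hij : (((i - j).toNat : ℕ) : ℝ) = i - j := by
      rw [← Int.cast_natCast, Int.toNat_of_nonneg (by simp at hi; omega), Int.cast_sub]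
    rw [← rpow_natCast, ← rpow_mul, ← mul_assoc, ← ENNReal.rpow_add _ _ two_ne_zero ofNat_ne_top,
      hij]
    ring_nf
  calc 2 ^ ((j : ℝ) * s) * ∑ i ∈ Finset.Icc j k, a i
      = ∑ i ∈ Finset.Icc j k, (2 ^ (-s)) ^ (i - j).toNat * (2 ^ ((i : ℝ) * s) * a i) := by
        rw [Finset.mul_sum]; exact Finset.sum_congr rfl hterm
    _ ≤ ∑ i ∈ Finset.Icc j k, (2 ^ (-s)) ^ (i - j).toNat * M :=
        Finset.sum_le_sum fun i hi => mul_le_mul_right (h i hi) _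
    _ ≤ (1 - 2 ^ (-s))⁻¹ * M := by
        rw [← Finset.sum_mul]; exact mul_le_mul_left (sum_Icc_pow_toNat_sub_le _ j k) M

lemma two_rpow_mul_sum_rpow_le {β τ : ℝ} (hτ : 0 < τ) {a : ℤ → ℝ≥0∞} {j k : ℤ}
    {D : ℝ≥0∞} (h : ∀ i ∈ Finset.Icc j k, 2 ^ ((i : ℝ) * β) * a i ^ τ ≤ D) :
    2 ^ ((j : ℝ) * β) * (∑ i ∈ Finset.Icc j k, a i) ^ τ ≤ (1 - 2 ^ (-(β / τ)))⁻¹ ^ τ * D := by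
  have hpow : ∀ (i : ℝ) (x : ℝ≥0∞), 2 ^ (i * β) * x ^ τ = (2 ^ (i * (β / τ)) * x) ^ τ := by
    intro i x
    rw [mul_rpow_of_nonneg _ _ hτ.le, ← rpow_mul]
    field_simp
  have h' : ∀ i ∈ Finset.Icc j k, 2 ^ ((i : ℝ) * (β / τ)) * a i ≤ D ^ τ⁻¹ := fun i hi => by
    rw [le_rpow_inv_iff hτ, ← hpow]; exact h i hi
  calc 2 ^ ((j : ℝ) * β) * (∑ i ∈ Finset.Icc j k, a i) ^ τ
      = (2 ^ ((j : ℝ) * (β / τ)) * ∑ i ∈ Finset.Icc j k, a i) ^ τ := hpow _ _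
    _ ≤ ((1 - 2 ^ (-(β / τ)))⁻¹ * D ^ τ⁻¹) ^ τ :=
        rpow_le_rpow (two_rpow_mul_sum_le h') hτ.le
    _ = _ := by rw [mul_rpow_of_nonneg _ _ hτ.le, ← rpow_mul, inv_mul_cancel₀ hτ.ne', rpow_one]

section StepOne

variable {r β ρ : ℝ} {v : ℝ → ℝ≥0∞}

lemma two_rpow_mul_Vr_one_rpow_le (hβ : 0 ≤ β) (hρ : 0 < ρ) (y : ℤ → ℝ) {j k : ℤ}
    (hjk : j - 1 ≤ k) {D : ℝ≥0∞}
    (hD : ∀ i ∈ Finset.Icc j k, 2 ^ ((i : ℝ) * β) * Vr 1 v (y (i - 1)) (y i) ^ ρ ≤ D) :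
    2 ^ ((j : ℝ) * β) * Vr 1 v (y (j - 1)) (y k) ^ ρ ≤ D := by
  have hV : Vr 1 v (y (j - 1)) (y k) ≤ ⨆ i ∈ Finset.Icc j k, Vr 1 v (y (i - 1)) (y i) := by
    simp only [Vr_coe, VrSet]
    exact (essSup_mono_measure' (Measure.restrict_mono (Ioc_subset_biUnion_Ioc_Icc y hjk)
      le_rfl)).trans (essSup_restrict_biUnion_finset_le _ _)
  calc 2 ^ ((j : ℝ) * β) * Vr 1 v (y (j - 1)) (y k) ^ ρ
      ≤ 2 ^ ((j : ℝ) * β) * (⨆ i ∈ Finset.Icc j k, Vr 1 v (y (i - 1)) (y i)) ^ ρ := by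
        gcongr
    _ = ⨆ i ∈ Finset.Icc j k, 2 ^ ((j : ℝ) * β) * Vr 1 v (y (i - 1)) (y i) ^ ρ := by
        have hsup := (orderIsoRpow ρ hρ).map_iSup₂ fun i (_ : i ∈ Finset.Icc j k) =>
          Vr 1 v (y (i - 1)) (y i)
        simp only [orderIsoRpow_apply] at hsup
        simp only [hsup, ENNReal.mul_iSup]
    _ ≤ D := iSup₂_le fun i hi => le_trans (by
        gcongr
        · exact one_le_two
        · exact (Finset.mem_Icc.1 hi).1) (hD i hi)

lemma two_rpow_mul_Vr_rpow_le_of_lt_one (hr0 : 0 < r) (hr1 : r < 1) (hρ : 0 < ρ) (y : ℤ → ℝ)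
    {j k : ℤ} (hjk : j - 1 ≤ k) {D : ℝ≥0∞}
    (hD : ∀ i ∈ Finset.Icc j k, 2 ^ ((i : ℝ) * β) * Vr r v (y (i - 1)) (y i) ^ ρ ≤ D) :
    2 ^ ((j : ℝ) * β) * Vr r v (y (j - 1)) (y k) ^ ρ ≤
      (1 - 2 ^ (-(β / ((1 - r) / r * ρ))))⁻¹ ^ ((1 - r) / r * ρ) * D := by
  set ν := volume.withDensity fun s => v s ^ (1 / (1 - r))
  have hV : ∀ x y : ℝ, Vr r v x y ^ ρ = ν (Ioc x y) ^ ((1 - r) / r * ρ) := fun x y => by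
    rw [Vr_coe, VrSet, if_neg hr1.ne, ← rpow_mul]
  simp only [hV] at hD ⊢
  refine le_trans ?_ (two_rpow_mul_sum_rpow_le (by have := sub_pos.2 hr1; positivity) hD)
  gcongr
  exact (measure_mono (Ioc_subset_biUnion_Ioc_Icc y hjk)).trans (measure_biUnion_finset_le _ _)

-- `τ = (1 - r) ρ / r` turns `V_r^ρ` into the `τ`-th power of the additive `∫ v^{1/(1-r)}`.
noncomputable def tailConst (r β ρ : ℝ) : ℝ≥0∞ :=
  if r = 1 then 1 else (1 - 2 ^ (-(β / ((1 - r) / r * ρ))))⁻¹ ^ ((1 - r) / r * ρ)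

lemma tailConst_ne_zero (hr0 : 0 < r) (hr1 : r ≤ 1) (hρ : 0 < ρ) : tailConst r β ρ ≠ 0 := by
  unfold tailConst
  split_ifs with hr
  · exact one_ne_zero
  · have hτ : 0 < (1 - r) / r * ρ := by have := sub_pos.2 (hr1.lt_of_ne hr); positivity
    simp [rpow_eq_zero_iff, sub_ne_top one_ne_top, not_lt.2 hτ.le]

lemma tailConst_ne_top (hr0 : 0 < r) (hr1 : r ≤ 1) (hβ : 0 < β) (hρ : 0 < ρ) :
    tailConst r β ρ ≠ ⊤ := by
  unfold tailConst
  split_ifs with hr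
  · exact one_ne_top
  · have hτ : 0 < (1 - r) / r * ρ := by have := sub_pos.2 (hr1.lt_of_ne hr); positivity
    refine rpow_ne_top_of_nonneg hτ.le (inv_ne_top.2 (tsub_pos_iff_lt.2 ?_).ne')
    exact rpow_lt_one_of_one_lt_of_neg one_lt_two (neg_lt_zero.2 (div_pos hβ hτ))

lemma two_rpow_mul_Vr_rpow_le (hr0 : 0 < r) (hr1 : r ≤ 1) (hβ : 0 ≤ β) (hρ : 0 < ρ)
    (y : ℤ → ℝ) {j k : ℤ} (hjk : j - 1 ≤ k) {D : ℝ≥0∞}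
    (hD : ∀ i ∈ Finset.Icc j k, 2 ^ ((i : ℝ) * β) * Vr r v (y (i - 1)) (y i) ^ ρ ≤ D) :
    2 ^ ((j : ℝ) * β) * Vr r v (y (j - 1)) (y k) ^ ρ ≤ tailConst r β ρ * D := by
  unfold tailConst
  split_ifs with hr
  · subst hr
    rw [one_mul]
    exact two_rpow_mul_Vr_one_rpow_le hβ hρ y hjk hD
  · exact two_rpow_mul_Vr_rpow_le_of_lt_one hr0 (hr1.lt_of_ne hr) hρ y hjk hD

end StepOne

lemma Wf_antitone (w : ℝ → ℝ≥0∞) (b : EReal) : Antitone (Wf w b) := fun _ _ h =>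
  lintegral_mono_set fun _ ht => ⟨(EReal.coe_le_coe_iff.2 h).trans_lt ht.1, ht.2⟩

lemma rpow_neg_le_rpow_neg {x y : ℝ≥0∞} (h : x ≤ y) {β : ℝ} (hβ : 0 ≤ β) :
    y ^ (-β) ≤ x ^ (-β) := by
  rw [rpow_neg, rpow_neg]
  exact ENNReal.inv_le_inv.2 (rpow_le_rpow h hβ)

lemma WithBot.le_coe_sub_one_of_lt {N : WithBot ℤ} {i : ℤ} (h : N < i) :
    N ≤ ((i - 1 : ℤ) : WithBot ℤ) := by
  cases N with
  | bot => exact bot_le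
  | coe n => exact WithBot.coe_le_coe.2 (by have := WithBot.coe_lt_coe.1 h; omega)

noncomputable def discreteSup (r β ρ : ℝ) (v : ℝ → ℝ≥0∞) (N : WithBot ℤ) (xs : ℤ → ℝ) (k : ℤ) :
    ℝ≥0∞ :=
  ⨆ i : {i : ℤ // N < (i : WithBot ℤ) ∧ i ≤ k},
    (2 : ℝ≥0∞) ^ (((i : ℤ) : ℝ) * β) * Vr r v (xs ((i : ℤ) - 1)) ((xs i : ℝ) : EReal) ^ ρ

noncomputable def weightedEssSup (r β ρ : ℝ) (v w : ℝ → ℝ≥0∞) (b : EReal) (a y : ℝ) : ℝ≥0∞ :=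
  essSup (fun t => Wf w b t ^ (-β) * Vr r v t ((y : ℝ) : EReal) ^ ρ) (volume.restrict (Ioo a y))

section Discretization

variable {r β ρ : ℝ} {v w : ℝ → ℝ≥0∞} {a : ℝ} {b : EReal} {N : WithBot ℤ} {xs : ℤ → ℝ} {k : ℤ}

lemma exists_index_le_lt {c : ℝ≥0∞} (hc : c ≠ 0) (hk : N < k) {t : ℝ} (ht : a < t)
    (hWt : Wf w b t ≠ ⊤) (hWx : ∀ m : ℤ, N ≤ m → c * 2 ^ (-(m : ℝ)) ≤ Wf w b (xs m))
    (h0 : ∀ n : ℤ, N = n → xs n = a) : ∃ m : ℤ, N ≤ m ∧ m ≤ k ∧ xs m < t := by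
  cases N with
  | coe n => exact ⟨n, le_rfl, (WithBot.coe_lt_coe.1 hk).le, h0 n rfl ▸ ht⟩
  | bot =>
    -- `W(x_m) ≥ c 2^{-m}` is unbounded as `m → -∞`, while `W(t) < ∞`.
    obtain ⟨n, hn⟩ := ENNReal.exists_nat_mul_gt hc hWt
    refine ⟨min k (-n), bot_le, min_le_left _ _, ?_⟩
    by_contra! htm
    have hn2 : (n : ℝ≥0∞) ≤ 2 ^ (-((min k (-n) : ℤ) : ℝ)) :=
      calc (n : ℝ≥0∞) ≤ ((2 ^ n : ℕ) : ℝ≥0∞) := by exact_mod_cast Nat.lt_two_pow_self.le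
        _ = 2 ^ ((n : ℕ) : ℝ) := by rw [rpow_natCast]; push_cast; rfl
        _ ≤ _ := rpow_le_rpow_of_exponent_le one_le_two
          (by push_cast; linarith [min_le_right (k : ℝ) (-n)])
    refine (hn.trans_le ?_).false
    calc (n : ℝ≥0∞) * c ≤ c * 2 ^ (-((min k (-n) : ℤ) : ℝ)) := by rw [mul_comm]; gcongr
      _ ≤ Wf w b (xs (min k (-n))) := hWx _ bot_le
      _ ≤ Wf w b t := Wf_antitone w b htm

lemma weightedEssSup_le (hr0 : 0 < r) (hr1 : r ≤ 1) (hβ : 0 ≤ β) (hρ : 0 < ρ) {c : ℝ≥0∞}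
    (hc : c ≠ 0) (hk : N < k) (hWt : ∀ t ∈ Ioo a (xs k), Wf w b t ≠ ⊤)
    (hWx : ∀ m : ℤ, N ≤ m → c * 2 ^ (-(m : ℝ)) ≤ Wf w b (xs m))
    (h0 : ∀ n : ℤ, N = n → xs n = a) :
    weightedEssSup r β ρ v w b a (xs k) ≤
      c ^ (-β) * tailConst r β ρ * discreteSup r β ρ v N xs k := by
  refine essSup_le_of_ae_le _ <| (ae_restrict_mem measurableSet_Ioo).mono fun t ht => ?_
  obtain ⟨m, hNm, hmk, hmt⟩ := exists_index_le_lt hc hk ht.1 (hWt t ht) hWx h0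
  have hcover := Ioc_subset_biUnion_Ioc_Icc xs (j := m + 1) (k := k) (by omega)
  rw [add_sub_cancel_right] at hcover
  obtain ⟨j, hj, htj⟩ := mem_iUnion₂.1 (hcover ⟨hmt, ht.2.le⟩)
  rw [Finset.mem_Icc] at hj
  have hNj : N < j := hNm.trans_lt (WithBot.coe_lt_coe.2 (by omega))
  have hW : Wf w b t ^ (-β) ≤ c ^ (-β) * 2 ^ ((j : ℝ) * β) :=
    calc Wf w b t ^ (-β) ≤ (c * 2 ^ (-(j : ℝ))) ^ (-β) :=
          rpow_neg_le_rpow_neg ((hWx j hNj.le).trans (Wf_antitone w b htj.2)) hβ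
      _ = c ^ (-β) * 2 ^ ((j : ℝ) * β) := by
          rw [mul_rpow_of_ne_zero hc (by simp), ← rpow_mul, neg_mul_neg]
  have hV : Vr r v t (xs k) ^ ρ ≤ Vr r v (xs (j - 1)) (xs k) ^ ρ :=
    rpow_le_rpow (Vr_le_Vr hr0 hr1 htj.1.le le_rfl) hρ.le
  have hstep := two_rpow_mul_Vr_rpow_le hr0 hr1 hβ hρ xs (by omega : j - 1 ≤ k)
    (D := discreteSup r β ρ v N xs k) fun i hi =>
      le_iSup_of_le (⟨i, hNm.trans_lt (WithBot.coe_lt_coe.2 (by simp at hi; omega)),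
        (Finset.mem_Icc.1 hi).2⟩ : {i : ℤ // N < (i : WithBot ℤ) ∧ i ≤ k}) le_rfl
  calc Wf w b t ^ (-β) * Vr r v t (xs k) ^ ρ
      ≤ c ^ (-β) * (2 ^ ((j : ℝ) * β) * Vr r v (xs (j - 1)) (xs k) ^ ρ) := by
        rw [← mul_assoc]; exact mul_le_mul' hW hV
    _ ≤ c ^ (-β) * tailConst r β ρ * discreteSup r β ρ v N xs k := by
        rw [mul_assoc]; gcongr

lemma two_rpow_mul_le_rpow_mul_rpow_neg {c x : ℝ≥0∞} (hc0 : c ≠ 0) (hc : c ≠ ⊤) {β s : ℝ}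
    (hβ : 0 ≤ β) (h : x ≤ c * 2 ^ (-(s - 1))) : 2 ^ (s * β) ≤ c ^ β * 2 ^ β * x ^ (-β) :=
  calc (2 : ℝ≥0∞) ^ (s * β) = c ^ β * 2 ^ β * (c ^ (-β) * 2 ^ ((s - 1) * β)) := by
        rw [mul_mul_mul_comm, ← ENNReal.rpow_add _ _ hc0 hc,
          ← ENNReal.rpow_add _ _ two_ne_zero ofNat_ne_top, add_neg_cancel, rpow_zero, one_mul]
        ring_nf
    _ = c ^ β * 2 ^ β * (c * 2 ^ (-(s - 1))) ^ (-β) := by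
        rw [mul_rpow_of_ne_zero hc0 (by simp), ← rpow_mul, neg_mul_neg]
    _ ≤ c ^ β * 2 ^ β * x ^ (-β) := mul_le_mul' le_rfl (rpow_neg_le_rpow_neg h hβ)

lemma discreteSup_le (hr0 : 0 < r) (hr1 : r ≤ 1) (hβ : 0 ≤ β) (hρ : 0 < ρ) {c : ℝ≥0∞}
    (hc0 : c ≠ 0) (hc : c ≠ ⊤) (hrange : ∀ m : ℤ, N ≤ m → a ≤ xs m)
    (hstrict : ∀ i j : ℤ, N ≤ i → i < j → xs i < xs j)
    (hWx : ∀ m : ℤ, N ≤ m → Wf w b (xs m) ≤ c * 2 ^ (-(m : ℝ))) :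
    discreteSup r β ρ v N xs k ≤ c ^ β * 2 ^ β * weightedEssSup r β ρ v w b a (xs k) := by
  refine iSup_le fun ⟨i, hNi, hik⟩ => ?_
  have hNi' := WithBot.le_coe_sub_one_of_lt hNi
  have hlt : xs (i - 1) < xs i := hstrict _ _ hNi' (by omega)
  have hxk : xs i ≤ xs k :=
    hik.eq_or_lt.elim (fun h => h ▸ le_rfl) fun h => (hstrict _ _ hNi.le h).le
  have hpt : ∀ t ∈ Ioo (xs (i - 1)) (xs i), 2 ^ ((i : ℝ) * β) * Vr r v t (xs i) ^ ρ ≤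
      c ^ β * 2 ^ β * (Wf w b t ^ (-β) * Vr r v t (xs k) ^ ρ) := fun t ht => by
    rw [← mul_assoc]
    refine mul_le_mul' (two_rpow_mul_le_rpow_mul_rpow_neg hc0 hc hβ ?_) ?_
    · exact (Wf_antitone w b ht.1.le).trans (by simpa using hWx _ hNi')
    · exact rpow_le_rpow (Vr_le_Vr hr0 hr1 le_rfl hxk) hρ.le
  calc 2 ^ ((i : ℝ) * β) * Vr r v (xs (i - 1)) (xs i) ^ ρ
      ≤ 2 ^ ((i : ℝ) * β) * essSup (fun t => Vr r v t (xs i) ^ ρ)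
          (volume.restrict (Ioo (xs (i - 1)) (xs i))) := by
        gcongr; exact Vr_rpow_le_essSup hr0 hr1 hρ hlt
    _ ≤ c ^ β * 2 ^ β * essSup (fun t => Wf w b t ^ (-β) * Vr r v t (xs k) ^ ρ)
          (volume.restrict (Ioo (xs (i - 1)) (xs i))) := by
        rw [← ENNReal.essSup_const_mul, ← ENNReal.essSup_const_mul]
        exact essSup_mono_ae ((ae_restrict_mem measurableSet_Ioo).mono hpt)
    _ ≤ c ^ β * 2 ^ β * weightedEssSup r β ρ v w b a (xs k) := by
        gcongr
        exact essSup_mono_measure'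
          (Measure.restrict_mono (Ioo_subset_Ioo (hrange _ hNi') hxk) le_rfl)

end Discretization

theorem disc_sup_esssup_equiv (p q r c₁ c₂ : ℝ)
    (hq : 0 < q) (hqp : q < p) (hr0 : 0 < r) (hr1 : r ≤ 1) (hc₁ : 0 < c₁) (hc₂ : 0 < c₂) :
    ∃ c C : ℝ, 0 < c ∧ 0 < C ∧
      ∀ (a : ℝ) (b : EReal), (a : EReal) < b → ∀ (v w : ℝ → ℝ≥0∞),
        Measurable v → Measurable w →
        ∀ (N : WithBot ℤ) (xs : ℤ → ℝ),
        (∀ x : ℝ, x ∈ erIoo (a : EReal) b → 0 < Wf w b x ∧ Wf w b x < ∞) →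
        (∀ k : ℤ, N ≤ (k : WithBot ℤ) → a ≤ xs k ∧ (xs k : EReal) ≤ b) →
        (∀ j k : ℤ, N ≤ (j : WithBot ℤ) → j < k → xs j < xs k) →
        (∀ k : ℤ, N ≤ (k : WithBot ℤ) →
          ENNReal.ofReal c₁ * (2 : ℝ≥0∞) ^ (-(k : ℝ)) ≤ Wf w b (xs k) ∧
            Wf w b (xs k) ≤ ENNReal.ofReal c₂ * (2 : ℝ≥0∞) ^ (-(k : ℝ))) →
        (∀ n : ℤ, N = (n : WithBot ℤ) → xs n = a) →
        ∀ k : ℤ, N < (k : WithBot ℤ) →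
          ENNReal.ofReal c *
              essSup (fun t => Wf w b t ^ (-(q / (p - q))) *
                  Vr r v t ((xs k : ℝ) : EReal) ^ (p * q / (p - q)))
                (volume.restrict (Set.Ioo a (xs k))) ≤
            (⨆ i : {i : ℤ // N < (i : WithBot ℤ) ∧ i ≤ k},
              (2 : ℝ≥0∞) ^ (((i : ℤ) : ℝ) * q / (p - q)) *
                Vr r v (xs ((i : ℤ) - 1)) ((xs i : ℝ) : EReal) ^ (p * q / (p - q))) ∧
          (⨆ i : {i : ℤ // N < (i : WithBot ℤ) ∧ i ≤ k},
            (2 : ℝ≥0∞) ^ (((i : ℤ) : ℝ) * q / (p - q)) *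
              Vr r v (xs ((i : ℤ) - 1)) ((xs i : ℝ) : EReal) ^ (p * q / (p - q))) ≤
            ENNReal.ofReal C *
              essSup (fun t => Wf w b t ^ (-(q / (p - q))) *
                  Vr r v t ((xs k : ℝ) : EReal) ^ (p * q / (p - q)))
                (volume.restrict (Set.Ioo a (xs k))) := by
  have hβ : 0 < q / (p - q) := div_pos hq (sub_pos.2 hqp)
  have hρ : 0 < p * (q / (p - q)) := mul_pos (hq.trans hqp) hβ
  set K := ENNReal.ofReal c₁ ^ (-(q / (p - q))) * tailConst r (q / (p - q)) (p * (q / (p - q)))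
  set L := ENNReal.ofReal c₂ ^ (q / (p - q)) * 2 ^ (q / (p - q))
  have hc₁0 : ENNReal.ofReal c₁ ≠ 0 := (ofReal_pos.2 hc₁).ne'
  have hc₂0 : ENNReal.ofReal c₂ ≠ 0 := (ofReal_pos.2 hc₂).ne'
  have hK0 : K ≠ 0 := mul_ne_zero (rpow_pos (ofReal_pos.2 hc₁) ofReal_ne_top).ne'
    (tailConst_ne_zero hr0 hr1 hρ)
  have hKT : K ≠ ⊤ := mul_ne_top (rpow_ne_top_of_ne_zero hc₁0 ofReal_ne_top)
    (tailConst_ne_top hr0 hr1 hβ hρ)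
  have hL0 : L ≠ 0 := mul_ne_zero (rpow_pos (ofReal_pos.2 hc₂) ofReal_ne_top).ne' (by simp)
  have hLT : L ≠ ⊤ := mul_ne_top (rpow_ne_top_of_ne_zero hc₂0 ofReal_ne_top) (by simp)
  refine ⟨K.toReal⁻¹, L.toReal, inv_pos.2 (toReal_pos hK0 hKT), toReal_pos hL0 hLT, ?_⟩
  intro a b _ v w _ _ N xs hW hrange hstrict hWx h0 k hk
  simp only [mul_div_assoc]
  rw [ofReal_inv_of_pos (toReal_pos hK0 hKT), ofReal_toReal hKT, ofReal_toReal hLT,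
    ENNReal.inv_mul_le_iff hK0 hKT]
  have hWt : ∀ t ∈ Ioo a (xs k), Wf w b t ≠ ⊤ := fun t ht =>
    (hW t ⟨EReal.coe_lt_coe_iff.2 ht.1,
      (EReal.coe_lt_coe_iff.2 ht.2).trans_le (hrange k hk.le).2⟩).2.ne
  exact ⟨weightedEssSup_le hr0 hr1 hβ.le hρ hc₁0 hk hWt
      (fun m hm => (hWx m hm).1) h0,
    discreteSup_le hr0 hr1 hβ.le hρ hc₂0 ofReal_ne_top
      (fun m hm => (hrange m hm).1) hstrict (fun m hm => (hWx m hm).2)⟩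
end
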